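/- Let T > 0, M, M₁ > 0, and set M₂ = (1 + 3M₁²) exp(3Tκ₂(T + 2M + 1)) and M₃ = 2(T + 2M + 1)κ₂M₂. Then every x ∈ C([-τ,T],ℝ^d) with ‖x₀‖ ≤ M₁ and I_T(x) ≤ M satisfies 1 + ‖x‖²_{[-τ,T]} ≤ M₂ and |x(t) − x(s)|² ≤ M₃|t − s| for all 0 ≤ s < t ≤ T; in particular x is uniformly bounded and Hölder continuous with exponent 1/2 on [0,T], with constants depending only on M₁, κ₂, M, T. -/

import Mathlib

open MeasureTheory Set Metric
open scoped ENNReal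

noncomputable section

/-- `ℝ^d`. -/
abbrev Vec (d : ℕ) := EuclideanSpace ℝ (Fin d)

/-- The state space `𝐂 = C([-τ,0],ℝ^d)`. -/
abbrev Hist (τ : ℝ) (d : ℕ) := C(Icc (-τ) (0:ℝ), Vec d)

/-- The path space `C([-τ,T],ℝ^d)`. -/
abbrev Traj (τ T : ℝ) (d : ℕ) := C(Icc (-τ) T, Vec d)

/-- Matrix acting on a vector. -/
def matVec {d m : ℕ} (M : Matrix (Fin d) (Fin m) ℝ) (v : Vec m) : Vec d :=
  WithLp.toLp 2 (fun i => ∑ j, M i j * v j)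

/-- Squared Frobenius norm of a matrix. -/
def frobSq {d m : ℕ} (M : Matrix (Fin d) (Fin m) ℝ) : ℝ := ∑ i, ∑ j, (M i j) ^ 2

/-- Frobenius norm of a matrix. -/
def frobNorm {d m : ℕ} (M : Matrix (Fin d) (Fin m) ℝ) : ℝ := Real.sqrt (frobSq M)

/-- Evaluation of a path at a time `t ∈ [-τ,T]` (clamped). -/
def ev {d : ℕ} {τ T : ℝ} (h : -τ ≤ T) (x : Traj τ T d) (t : ℝ) : Vec d :=
  x (projIcc (-τ) T h t)

/-- The history segment `x_t ∈ 𝐂` of a path `x ∈ C([-τ,T],ℝ^d)`, for `t ∈ [0,T]`. -/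
def seg {d : ℕ} {τ T : ℝ} (h : -τ ≤ T) (x : Traj τ T d) (t : ℝ) : Hist τ d :=
  ⟨fun s => x (projIcc (-τ) T h (t + s.1)),
    x.continuous.comp <| continuous_projIcc.comp <| continuous_const.add continuous_subtype_val⟩

/-- The uniform Lipschitz assumption on the coefficients:
`|b(φ)−b(ψ)|² + |σ(φ)−σ(ψ)|² ≤ κ₁ ‖φ−ψ‖²`. -/
def LipCoeff {d m : ℕ} {τ : ℝ} (b : Hist τ d → Vec d)
    (σ' : Hist τ d → Matrix (Fin d) (Fin m) ℝ) (κ₁ : ℝ) : Prop :=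
  ∀ φ ψ : Hist τ d, ‖b φ - b ψ‖ ^ 2 + frobSq (σ' φ - σ' ψ) ≤ κ₁ * ‖φ - ψ‖ ^ 2

/-- The linear growth bound `|b(φ)|² + |σ(φ)|² ≤ κ₂ (1 + ‖φ‖²)`. -/
def GrowthCoeff {d m : ℕ} {τ : ℝ} (b : Hist τ d → Vec d)
    (σ' : Hist τ d → Matrix (Fin d) (Fin m) ℝ) (κ₂ : ℝ) : Prop :=
  ∀ φ : Hist τ d, ‖b φ‖ ^ 2 + frobSq (σ' φ) ≤ κ₂ * (1 + ‖φ‖ ^ 2)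

/-- The set `U_T(x)` of controls `u ∈ L²([0,T],ℝ^m)` satisfying
`x(t) = x(0) + ∫₀ᵗ b(x_s) ds + ∫₀ᵗ σ(x_s) u(s) ds` for `t ∈ [0,T]`. -/
def controls {d m : ℕ} {τ T : ℝ} (h : -τ ≤ T) (b : Hist τ d → Vec d)
    (σ' : Hist τ d → Matrix (Fin d) (Fin m) ℝ) (x : Traj τ T d) : Set (ℝ → Vec m) :=
  {u | MemLp u 2 (volume.restrict (Icc 0 T)) ∧
    ∀ t ∈ Icc (0:ℝ) T,
      ev h x t = ev h x 0 + (∫ s in (0:ℝ)..t, b (seg h x s)) +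
        ∫ s in (0:ℝ)..t, matVec (σ' (seg h x s)) (u s)}

/-- The rate function `I_T(x) = inf_{u ∈ U_T(x)} ½∫₀ᵀ |u(s)|² ds` (with value `∞` if
`U_T(x) = ∅`). -/
def rate {d m : ℕ} {τ T : ℝ} (h : -τ ≤ T) (b : Hist τ d → Vec d)
    (σ' : Hist τ d → Matrix (Fin d) (Fin m) ℝ) (x : Traj τ T d) : ℝ≥0∞ :=
  ⨅ (u : ℝ → Vec m) (_ : u ∈ controls h b σ' x),
    ENNReal.ofReal ((1/2) * ∫ s in (0:ℝ)..T, ‖u s‖ ^ 2)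

open Classical in
/-- The rate function `I_T^φ(x)`, which is `I_T(x)` if `x₀ = φ` and `∞` otherwise. -/
def rateAt {d m : ℕ} {τ T : ℝ} (h : -τ ≤ T) (b : Hist τ d → Vec d)
    (σ' : Hist τ d → Matrix (Fin d) (Fin m) ℝ) (φ : Hist τ d) (x : Traj τ T d) : ℝ≥0∞ :=
  if seg h x 0 = φ then rate h b σ' x else ⊤

/-- The supremum norm `‖x‖_{[-τ,t]} = sup_{s ∈ [-τ,t]} |x(s)|` of a path. -/
def supNormOn {d : ℕ} {τ T : ℝ} (h : -τ ≤ T) (x : Traj τ T d) (t : ℝ) : ℝ :=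
  sSup ((fun s => ‖ev h x s‖) '' Icc (-τ) t)


/-!
Pick a control `u` with `∫₀ᵀ |u|² ≤ 2M + 1` and put `f r = 1 + ‖x‖²_{[-τ,r]}`. Writing
`x t - x s` as a drift integral plus a control integral and applying Cauchy–Schwarz to both gives
`|x t - x s|² ≤ 2 (T + 2M + 1) κ₂ ∫ₛᵗ f`. Together with `‖x₀‖ ≤ M₁` this yields
`f ρ ≤ 1 + 3 M₁² + 3 (T + 2M + 1) κ₂ ∫₀^ρ f`, so Grönwall's inequality bounds `f` by `M₂` on
`[0, T]`, and feeding `f ≤ M₂` back into the first estimate gives the Hölder bound.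
-/

open Real Filter Topology

lemma sq_integral_mul_le {α : Type*} [MeasurableSpace α] {μ : Measure α} {F G : α → ℝ}
    (hF₀ : 0 ≤ᵐ[μ] F) (hG₀ : 0 ≤ᵐ[μ] G) (hF : MemLp F 2 μ) (hG : MemLp G 2 μ) :
    (∫ a, F a * G a ∂μ) ^ 2 ≤ (∫ a, F a ^ 2 ∂μ) * ∫ a, G a ^ 2 ∂μ := by
  have hHolder := integral_mul_le_Lp_mul_Lq_of_nonneg HolderConjugate.two_two hF₀ hG₀
    (by simpa using hF) (by simpa using hG)
  simp only [rpow_two, ← sqrt_eq_rpow] at hHolder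
  have hFG : 0 ≤ ∫ a, F a * G a ∂μ :=
    integral_nonneg_of_ae (by filter_upwards [hF₀, hG₀] with a hFa hGa using mul_nonneg hFa hGa)
  calc (∫ a, F a * G a ∂μ) ^ 2
      ≤ (√(∫ a, F a ^ 2 ∂μ) * √(∫ a, G a ^ 2 ∂μ)) ^ 2 := pow_le_pow_left₀ hFG hHolder 2
    _ = (∫ a, F a ^ 2 ∂μ) * ∫ a, G a ^ 2 ∂μ := by
      rw [mul_pow, sq_sqrt (integral_nonneg fun _ => sq_nonneg _),
        sq_sqrt (integral_nonneg fun _ => sq_nonneg _)]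

lemma sq_intervalIntegral_mul_le {F G : ℝ → ℝ} {s t : ℝ} (hst : s ≤ t)
    (hF₀ : ∀ r, 0 ≤ F r) (hG₀ : ∀ r, 0 ≤ G r)
    (hF : MemLp F 2 (volume.restrict (Ioc s t))) (hG : MemLp G 2 (volume.restrict (Ioc s t))) :
    (∫ r in s..t, F r * G r) ^ 2 ≤ (∫ r in s..t, F r ^ 2) * ∫ r in s..t, G r ^ 2 := by
  simp only [intervalIntegral.integral_of_le hst]
  exact sq_integral_mul_le (.of_forall hF₀) (.of_forall hG₀) hF hG

lemma Continuous.memLp_restrict_Ioc {E : Type*} [NormedAddCommGroup E] {g : ℝ → E}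
    (hg : Continuous g) (p : ℝ≥0∞) (s t : ℝ) : MemLp g p (volume.restrict (Ioc s t)) := by
  obtain ⟨C, hC⟩ := (isCompact_Icc (a := s) (b := t)).exists_bound_of_continuousOn hg.continuousOn
  exact .of_bound hg.aestronglyMeasurable C
    ((ae_restrict_iff' measurableSet_Ioc).2 (.of_forall fun r hr => hC r (Ioc_subset_Icc_self hr)))

lemma norm_intervalIntegral_sq_le {E : Type*} [NormedAddCommGroup E] [NormedSpace ℝ E]
    {g : ℝ → E} (hg : Continuous g) {s t : ℝ} (hst : s ≤ t) :
    ‖∫ r in s..t, g r‖ ^ 2 ≤ (t - s) * ∫ r in s..t, ‖g r‖ ^ 2 := by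
  have hCS := sq_intervalIntegral_mul_le hst (fun r => norm_nonneg (g r)) (fun _ => zero_le_one)
    (hg.norm.memLp_restrict_Ioc 2 s t) (continuous_const.memLp_restrict_Ioc 2 s t)
  simp only [mul_one, one_pow, intervalIntegral.integral_const, smul_eq_mul] at hCS
  calc ‖∫ r in s..t, g r‖ ^ 2 ≤ (∫ r in s..t, ‖g r‖) ^ 2 := by
        gcongr; exact intervalIntegral.norm_integral_le_integral_norm hst
    _ ≤ (t - s) * ∫ r in s..t, ‖g r‖ ^ 2 := by linarith

theorem le_mul_exp_of_le_add_integral {f : ℝ → ℝ} {a b c K : ℝ} (hK : 0 ≤ K)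
    (hf : ContinuousOn f (Icc a b)) (hle : ∀ t ∈ Icc a b, f t ≤ c + K * ∫ s in a..t, f s) :
    ∀ t ∈ Icc a b, f t ≤ c * exp (K * (t - a)) := by
  have hF_cont : ContinuousOn (fun t => ∫ s in a..t, f s) (Icc a b) := by
    rcases le_or_gt a b with hab | hba
    · rw [← uIcc_of_le hab] at hf ⊢
      exact intervalIntegral.continuousOn_primitive_interval hf.integrableOn_uIcc
    · simp [Icc_eq_empty_of_lt hba]
  have hF_deriv : ∀ t ∈ Ico a b, HasDerivWithinAt (fun t => ∫ s in a..t, f s) (f t) (Ici t) t := by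
    intro t ht
    have hmem : Icc a b ∈ 𝓝[>] t :=
      ordConnected_Icc.mem_nhdsGT (Ico_subset_Icc_self ht) (right_mem_Icc.2 (ht.1.trans ht.2.le))
        ht.2
    exact intervalIntegral.integral_hasDerivWithinAt_right
      ((hf.mono (Icc_subset_Icc le_rfl ht.2.le)).intervalIntegrable_of_Icc ht.1)
      ⟨Icc a b, hmem, hf.aestronglyMeasurable measurableSet_Icc⟩
      ((hf t (Ico_subset_Icc_self ht)).mono_of_mem_nhdsWithin hmem)
  have hF_le : ∀ t ∈ Icc a b, ∫ s in a..t, f s ≤ gronwallBound 0 K c (t - a) :=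
    le_gronwallBound_of_liminf_deriv_right_le hF_cont
      (fun t ht _ hr => (hF_deriv t ht).liminf_right_slope_le hr) (by simp)
      (fun t ht => by linarith [hle t (Ico_subset_Icc_self ht)])
  have hbound : ∀ y, c + K * gronwallBound 0 K c y = c * exp (K * y) := by
    intro y
    rcases hK.eq_or_lt with rfl | hK
    · simp
    · rw [gronwallBound_of_K_ne_0 hK.ne']
      field_simp
      ring
  intro t ht
  calc f t ≤ c + K * ∫ s in a..t, f s := hle t ht
    _ ≤ c + K * gronwallBound 0 K c (t - a) := by gcongr; exact hF_le t ht
    _ = c * exp (K * (t - a)) := hbound _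

lemma continuousOn_sSup_image_Icc {g : ℝ → ℝ} (hg : Continuous g) (a : ℝ) :
    ContinuousOn (fun t => sSup (g '' Icc a t)) (Ici a) := by
  -- parametrize `[a, t]` by the fixed compact set `[0, 1]`
  have hc : Continuous fun t => sSup ((fun c => g (AffineMap.lineMap a t c)) '' Icc (0:ℝ) 1) :=
    isCompact_Icc.continuous_sSup (hg.comp (by simp only [AffineMap.lineMap_apply_ring']; fun_prop))
  refine hc.continuousOn.congr fun t ht => ?_
  simp only
  rw [← segment_eq_Icc (𝕜 := ℝ) ht, segment_eq_image_lineMap, image_image]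

section Matrix

variable {d m : ℕ}

lemma frobSq_nonneg (A : Matrix (Fin d) (Fin m) ℝ) : 0 ≤ frobSq A := by
  unfold frobSq; positivity

lemma sq_le_frobSq (A : Matrix (Fin d) (Fin m) ℝ) (i : Fin d) (j : Fin m) :
    A i j ^ 2 ≤ frobSq A :=
  (Finset.single_le_sum (f := fun j' => A i j' ^ 2) (fun _ _ => sq_nonneg _)
    (Finset.mem_univ j)).trans
  (Finset.single_le_sum (f := fun i' => ∑ j', A i' j' ^ 2)
    (fun _ _ => Finset.sum_nonneg fun _ _ => sq_nonneg _) (Finset.mem_univ i))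

lemma frobNorm_nonneg (A : Matrix (Fin d) (Fin m) ℝ) : 0 ≤ frobNorm A := sqrt_nonneg _

lemma frobNorm_sq (A : Matrix (Fin d) (Fin m) ℝ) : frobNorm A ^ 2 = frobSq A :=
  sq_sqrt (frobSq_nonneg A)

lemma continuous_frobSq : Continuous (frobSq : Matrix (Fin d) (Fin m) ℝ → ℝ) := by
  unfold frobSq; fun_prop

lemma continuous_frobNorm : Continuous (frobNorm : Matrix (Fin d) (Fin m) ℝ → ℝ) :=
  continuous_sqrt.comp continuous_frobSq

lemma continuous_matVec :
    Continuous fun p : Matrix (Fin d) (Fin m) ℝ × Vec m => matVec p.1 p.2 := by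
  unfold matVec; fun_prop

lemma norm_matVec_le (A : Matrix (Fin d) (Fin m) ℝ) (v : Vec m) :
    ‖matVec A v‖ ≤ frobNorm A * ‖v‖ := by
  have hsq : ‖matVec A v‖ ^ 2 ≤ (frobNorm A * ‖v‖) ^ 2 := by
    simp only [mul_pow, frobNorm_sq, EuclideanSpace.norm_sq_eq, Real.norm_eq_abs, sq_abs, frobSq,
      matVec]
    rw [Finset.sum_mul]
    exact Finset.sum_le_sum fun i _ => Finset.sum_mul_sq_le_sq_mul_sq _ _ _
  exact (pow_le_pow_iff_left₀ (norm_nonneg _)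
    (mul_nonneg (frobNorm_nonneg A) (norm_nonneg v)) two_ne_zero).1 hsq

end Matrix

lemma continuous_of_norm_sub_sq_le {E F : Type*} [SeminormedAddCommGroup E]
    [SeminormedAddCommGroup F] {f : E → F} {κ : ℝ}
    (hf : ∀ x y, ‖f x - f y‖ ^ 2 ≤ κ * ‖x - y‖ ^ 2) : Continuous f := by
  refine (LipschitzWith.of_dist_le' (K := √κ) fun x y => ?_).continuous
  rw [dist_eq_norm, dist_eq_norm, ← sqrt_sq (norm_nonneg (f x - f y)),
    ← sqrt_sq (norm_nonneg (x - y)), ← sqrt_mul' κ (sq_nonneg _)]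
  exact sqrt_le_sqrt (hf x y)

section Coefficients

variable {d m : ℕ} {τ : ℝ} {b : Hist τ d → Vec d} {σ' : Hist τ d → Matrix (Fin d) (Fin m) ℝ}

lemma LipCoeff.continuous_drift {κ₁ : ℝ} (hlip : LipCoeff b σ' κ₁) : Continuous b :=
  continuous_of_norm_sub_sq_le fun φ ψ =>
    (le_add_of_nonneg_right (frobSq_nonneg _)).trans (hlip φ ψ)

lemma LipCoeff.continuous_diffusion {κ₁ : ℝ} (hlip : LipCoeff b σ' κ₁) : Continuous σ' :=
  continuous_pi fun i => continuous_pi fun j =>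
    continuous_of_norm_sub_sq_le (f := fun φ => σ' φ i j) fun φ ψ => by
      rw [Real.norm_eq_abs, sq_abs]
      exact (sq_le_frobSq (σ' φ - σ' ψ) i j).trans
        ((le_add_of_nonneg_left (sq_nonneg _)).trans (hlip φ ψ))

lemma GrowthCoeff.nonneg {κ₂ : ℝ} (hgrowth : GrowthCoeff b σ' κ₂) : 0 ≤ κ₂ := by
  have h0 := hgrowth 0
  rw [norm_zero, zero_pow two_ne_zero, add_zero, mul_one] at h0
  exact (add_nonneg (sq_nonneg _) (frobSq_nonneg _)).trans h0

end Coefficients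

section Path

variable {d : ℕ} {τ T : ℝ} (h : -τ ≤ T) (x : Traj τ T d)

lemma continuous_ev : Continuous (ev h x) := x.continuous.comp continuous_projIcc

lemma seg_apply (t : ℝ) (s : Icc (-τ) (0:ℝ)) : seg h x t s = ev h x (t + s) := rfl

lemma continuous_seg : Continuous (seg h x) :=
  ContinuousMap.continuous_of_continuous_uncurry _
    ((continuous_ev h x).comp (continuous_fst.add (continuous_subtype_val.comp continuous_snd)))

lemma norm_ev_le_norm_seg_zero {s : ℝ} (hs : s ∈ Icc (-τ) 0) : ‖ev h x s‖ ≤ ‖seg h x 0‖ := by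
  simpa only [seg_apply, zero_add] using (seg h x 0).norm_coe_le_norm ⟨s, hs⟩

lemma norm_ev_le_supNormOn {s t : ℝ} (hs : s ∈ Icc (-τ) t) : ‖ev h x s‖ ≤ supNormOn h x t :=
  le_csSup ⟨‖x‖, by rintro _ ⟨r, -, rfl⟩; exact x.norm_coe_le_norm _⟩ (mem_image_of_mem _ hs)

lemma supNormOn_nonneg {t : ℝ} (ht : -τ ≤ t) : 0 ≤ supNormOn h x t :=
  (norm_nonneg _).trans (norm_ev_le_supNormOn h x (left_mem_Icc.2 ht))

lemma supNormOn_sq_le {t C : ℝ} (ht : -τ ≤ t) (hC : ∀ s ∈ Icc (-τ) t, ‖ev h x s‖ ^ 2 ≤ C) :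
    supNormOn h x t ^ 2 ≤ C := by
  have hC₀ : 0 ≤ C := (sq_nonneg _).trans (hC _ (left_mem_Icc.2 ht))
  have hle : supNormOn h x t ≤ √C :=
    csSup_le ((nonempty_Icc.2 ht).image _) (by
      rintro _ ⟨s, hs, rfl⟩
      exact le_sqrt_of_sq_le (hC s hs))
  exact (le_sqrt (supNormOn_nonneg h x ht) hC₀).1 hle

lemma norm_seg_le_supNormOn (hτ : 0 ≤ τ) {t : ℝ} (ht : 0 ≤ t) :
    ‖seg h x t‖ ≤ supNormOn h x t :=
  (ContinuousMap.norm_le _ (supNormOn_nonneg h x (by linarith))).2 fun s =>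
    norm_ev_le_supNormOn h x ⟨by linarith [s.2.1], by linarith [s.2.2]⟩

lemma continuousOn_supNormOn : ContinuousOn (supNormOn h x) (Ici (-τ)) :=
  continuousOn_sSup_image_Icc (continuous_ev h x).norm (-τ)

lemma continuousOn_one_add_supNormOn_sq :
    ContinuousOn (fun r => 1 + supNormOn h x r ^ 2) (Ici (-τ)) :=
  continuousOn_const.add ((continuousOn_supNormOn h x).pow 2)

lemma intervalIntegrable_one_add_supNormOn_sq (hτ : 0 ≤ τ) {s t : ℝ} (hs : 0 ≤ s) (ht : 0 ≤ t) :
    IntervalIntegrable (fun r => 1 + supNormOn h x r ^ 2) volume s t :=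
  ((continuousOn_one_add_supNormOn_sq h x).mono fun _ hr =>
    show -τ ≤ _ from (by linarith [le_min hs ht] : -τ ≤ min s t).trans hr.1).intervalIntegrable

end Path

section MatVecIntegral

variable {d m : ℕ} {A : ℝ → Matrix (Fin d) (Fin m) ℝ} {v : ℝ → Vec m} {s t : ℝ}

lemma integrableOn_frobNorm_mul_norm (hA : Continuous A)
    (hv : MemLp v 2 (volume.restrict (Ioc s t))) :
    IntegrableOn (fun r => frobNorm (A r) * ‖v r‖) (Ioc s t) :=
  ((continuous_frobNorm.comp hA).memLp_restrict_Ioc 2 s t).integrable_mul hv.norm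

lemma intervalIntegrable_matVec (hA : Continuous A) (hv : MemLp v 2 (volume.restrict (Ioc s t)))
    (hst : s ≤ t) : IntervalIntegrable (fun r => matVec (A r) (v r)) volume s t :=
  (intervalIntegrable_iff_integrableOn_Ioc_of_le hst).2 <|
    (integrableOn_frobNorm_mul_norm hA hv).mono'
      (Continuous.comp_aestronglyMeasurable₂ (g := fun r w => matVec (A r) w)
        (continuous_matVec.comp ((hA.comp continuous_fst).prodMk continuous_snd))
        aestronglyMeasurable_id hv.1)
      (.of_forall fun _ => norm_matVec_le _ _)

lemma norm_intervalIntegral_matVec_sq_le (hA : Continuous A)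
    (hv : MemLp v 2 (volume.restrict (Ioc s t))) (hst : s ≤ t) :
    ‖∫ r in s..t, matVec (A r) (v r)‖ ^ 2
      ≤ (∫ r in s..t, frobSq (A r)) * ∫ r in s..t, ‖v r‖ ^ 2 := by
  have hle : ‖∫ r in s..t, matVec (A r) (v r)‖ ≤ ∫ r in s..t, frobNorm (A r) * ‖v r‖ :=
    intervalIntegral.norm_integral_le_of_norm_le hst (.of_forall fun _ _ => norm_matVec_le _ _)
      ((intervalIntegrable_iff_integrableOn_Ioc_of_le hst).2
        (integrableOn_frobNorm_mul_norm hA hv))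
  have hCS := sq_intervalIntegral_mul_le hst (fun r => frobNorm_nonneg (A r))
    (fun r => norm_nonneg (v r)) ((continuous_frobNorm.comp hA).memLp_restrict_Ioc 2 s t) hv.norm
  simp only [frobNorm_sq] at hCS
  calc ‖∫ r in s..t, matVec (A r) (v r)‖ ^ 2 ≤ (∫ r in s..t, frobNorm (A r) * ‖v r‖) ^ 2 := by
        gcongr
    _ ≤ _ := hCS

end MatVecIntegral

section Controls

variable {d m : ℕ} {τ T : ℝ} {h : -τ ≤ T} {b : Hist τ d → Vec d}
  {σ' : Hist τ d → Matrix (Fin d) (Fin m) ℝ} {x : Traj τ T d} {u : ℝ → Vec m}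

lemma exists_mem_controls_of_rate_lt {c : ℝ} (hc : rate h b σ' x < ENNReal.ofReal c) :
    ∃ u ∈ controls h b σ' x, (1 / 2) * ∫ r in (0:ℝ)..T, ‖u r‖ ^ 2 < c := by
  simp only [rate, iInf_lt_iff, ENNReal.ofReal_lt_ofReal_iff'] at hc
  obtain ⟨u, hu, hlt, -⟩ := hc
  exact ⟨u, hu, hlt⟩

lemma memLp_restrict_Ioc_of_mem_controls (hu : u ∈ controls h b σ' x) {s t : ℝ} (hs : 0 ≤ s)
    (ht : t ≤ T) : MemLp u 2 (volume.restrict (Ioc s t)) :=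
  hu.1.mono_measure
    (Measure.restrict_mono (Ioc_subset_Icc_self.trans (Icc_subset_Icc hs ht)) le_rfl)

lemma sub_eq_integral_of_mem_controls (hb : Continuous b) (hσ : Continuous σ')
    (hu : u ∈ controls h b σ' x) {s t : ℝ} (hs : 0 ≤ s) (hst : s ≤ t) (ht : t ≤ T) :
    ev h x t - ev h x s
      = (∫ r in s..t, b (seg h x r)) + ∫ r in s..t, matVec (σ' (seg h x r)) (u r) := by
  have hdrift (a c : ℝ) : IntervalIntegrable (fun r => b (seg h x r)) volume a c :=
    (hb.comp (continuous_seg h x)).intervalIntegrable a c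
  have hnoise {c : ℝ} (hc₀ : 0 ≤ c) (hc : c ≤ T) :
      IntervalIntegrable (fun r => matVec (σ' (seg h x r)) (u r)) volume 0 c :=
    intervalIntegrable_matVec (hσ.comp (continuous_seg h x))
      (memLp_restrict_Ioc_of_mem_controls hu le_rfl hc) hc₀
  rw [hu.2 t ⟨hs.trans hst, ht⟩, hu.2 s ⟨hs, hst.trans ht⟩,
    ← intervalIntegral.integral_interval_sub_left (hdrift 0 t) (hdrift 0 s),
    ← intervalIntegral.integral_interval_sub_left (hnoise (hs.trans hst) ht)
      (hnoise hs (hst.trans ht))]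
  abel

lemma intervalIntegral_norm_sq_le_of_mem_controls (hu : u ∈ controls h b σ' x) {s t : ℝ}
    (hs : 0 ≤ s) (hst : s ≤ t) (ht : t ≤ T) :
    ∫ r in s..t, ‖u r‖ ^ 2 ≤ ∫ r in (0:ℝ)..T, ‖u r‖ ^ 2 :=
  intervalIntegral.integral_mono_interval hs hst ht (.of_forall fun _ => sq_nonneg _)
    ((intervalIntegrable_iff_integrableOn_Ioc_of_le (hs.trans (hst.trans ht))).2
      (IntegrableOn.mono_set (hu.1.integrable_norm_pow two_ne_zero) Ioc_subset_Icc_self))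

lemma norm_sub_sq_le_of_mem_controls (hb : Continuous b) (hσ : Continuous σ')
    (hu : u ∈ controls h b σ' x) {L : ℝ} (hL : ∫ r in (0:ℝ)..T, ‖u r‖ ^ 2 ≤ L)
    {s t : ℝ} (hs : 0 ≤ s) (hst : s ≤ t) (ht : t ≤ T) :
    ‖ev h x t - ev h x s‖ ^ 2
      ≤ 2 * (T + L) * ∫ r in s..t, (‖b (seg h x r)‖ ^ 2 + frobSq (σ' (seg h x r))) := by
  have hbx : Continuous fun r => b (seg h x r) := hb.comp (continuous_seg h x)
  have hσx : Continuous fun r => σ' (seg h x r) := hσ.comp (continuous_seg h x)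
  rw [intervalIntegral.integral_add (f := fun r => ‖b (seg h x r)‖ ^ 2)
      (g := fun r => frobSq (σ' (seg h x r))) ((hbx.norm.pow 2).intervalIntegrable s t)
      ((continuous_frobSq.comp hσx).intervalIntegrable s t),
    sub_eq_integral_of_mem_controls hb hσ hu hs hst ht]
  set I₁ := ∫ r in s..t, b (seg h x r)
  set I₂ := ∫ r in s..t, matVec (σ' (seg h x r)) (u r)
  set B := ∫ r in s..t, ‖b (seg h x r)‖ ^ 2
  set S := ∫ r in s..t, frobSq (σ' (seg h x r))
  set U := ∫ r in s..t, ‖u r‖ ^ 2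
  have hB₀ : 0 ≤ B := intervalIntegral.integral_nonneg hst fun _ _ => sq_nonneg _
  have hS₀ : 0 ≤ S := intervalIntegral.integral_nonneg hst fun _ _ => frobSq_nonneg _
  have hU₀ : 0 ≤ U := intervalIntegral.integral_nonneg hst fun _ _ => sq_nonneg _
  have hUL : U ≤ L := (intervalIntegral_norm_sq_le_of_mem_controls hu hs hst ht).trans hL
  calc ‖I₁ + I₂‖ ^ 2 ≤ 2 * ‖I₁‖ ^ 2 + 2 * ‖I₂‖ ^ 2 := by
        nlinarith [norm_add_le I₁ I₂, norm_nonneg (I₁ + I₂), sq_nonneg (‖I₁‖ - ‖I₂‖)]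
    _ ≤ 2 * ((t - s) * B) + 2 * (S * U) := by
        gcongr
        · exact norm_intervalIntegral_sq_le hbx hst
        · exact norm_intervalIntegral_matVec_sq_le hσx
            (memLp_restrict_Ioc_of_mem_controls hu hs ht) hst
    _ ≤ 2 * (T + L) * (B + S) := by nlinarith

lemma norm_sub_sq_le_integral_supNormOn (hτ : 0 ≤ τ) (hb : Continuous b) (hσ : Continuous σ')
    {κ₂ : ℝ} (hgrowth : GrowthCoeff b σ' κ₂) (hu : u ∈ controls h b σ' x) {L : ℝ}
    (hL : ∫ r in (0:ℝ)..T, ‖u r‖ ^ 2 ≤ L) {s t : ℝ} (hs : 0 ≤ s) (hst : s ≤ t) (ht : t ≤ T) :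
    ‖ev h x t - ev h x s‖ ^ 2 ≤ 2 * (T + L) * κ₂ * ∫ r in s..t, (1 + supNormOn h x r ^ 2) := by
  have hL₀ : 0 ≤ L :=
    (intervalIntegral.integral_nonneg (hs.trans (hst.trans ht)) fun _ _ => sq_nonneg _).trans hL
  have hσx : Continuous fun r => σ' (seg h x r) := hσ.comp (continuous_seg h x)
  calc ‖ev h x t - ev h x s‖ ^ 2
      ≤ 2 * (T + L) * ∫ r in s..t, (‖b (seg h x r)‖ ^ 2 + frobSq (σ' (seg h x r))) :=
        norm_sub_sq_le_of_mem_controls hb hσ hu hL hs hst ht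
    _ ≤ 2 * (T + L) * ∫ r in s..t, κ₂ * (1 + supNormOn h x r ^ 2) := by
        gcongr ?_ * ?_
        · linarith
        refine intervalIntegral.integral_mono_on hst
          ((((hb.comp (continuous_seg h x)).norm.pow 2).add
            (continuous_frobSq.comp hσx)).intervalIntegrable s t)
          ((intervalIntegrable_one_add_supNormOn_sq h x hτ hs (hs.trans hst)).const_mul κ₂)
          fun r hr => (hgrowth _).trans ?_
        have hr₀ : 0 ≤ r := hs.trans hr.1
        gcongr
        · exact hgrowth.nonneg
        · exact norm_seg_le_supNormOn h x hτ hr₀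
    _ = 2 * (T + L) * κ₂ * ∫ r in s..t, (1 + supNormOn h x r ^ 2) := by
        rw [intervalIntegral.integral_const_mul]; ring

lemma one_add_supNormOn_sq_le (hτ : 0 ≤ τ) (hb : Continuous b) (hσ : Continuous σ')
    {κ₂ : ℝ} (hgrowth : GrowthCoeff b σ' κ₂) (hu : u ∈ controls h b σ' x) {L : ℝ}
    (hL : ∫ r in (0:ℝ)..T, ‖u r‖ ^ 2 ≤ L) {M₁ : ℝ} (hx0 : ‖seg h x 0‖ ≤ M₁)
    {ρ : ℝ} (hρ : ρ ∈ Icc 0 T) :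
    1 + supNormOn h x ρ ^ 2
      ≤ (1 + 3 * M₁ ^ 2) + 3 * (T + L) * κ₂ * ∫ r in (0:ℝ)..ρ, (1 + supNormOn h x r ^ 2) := by
  have hL₀ : 0 ≤ L :=
    (intervalIntegral.integral_nonneg (hρ.1.trans hρ.2) fun _ _ => sq_nonneg _).trans hL
  have hκ₂ := hgrowth.nonneg
  have hG₀ : 0 ≤ ∫ r in (0:ℝ)..ρ, (1 + supNormOn h x r ^ 2) :=
    intervalIntegral.integral_nonneg hρ.1 fun _ _ => by positivity
  suffices supNormOn h x ρ ^ 2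
      ≤ 3 * M₁ ^ 2 + 3 * (T + L) * κ₂ * ∫ r in (0:ℝ)..ρ, (1 + supNormOn h x r ^ 2) by linarith
  have hpos : 0 ≤ (T + L) * κ₂ := mul_nonneg (by linarith [hρ.1, hρ.2]) hκ₂
  refine supNormOn_sq_le h x (by linarith [hρ.1]) fun s hs => ?_
  rcases le_or_gt s 0 with hs₀ | hs₀
  · have hxs : ‖ev h x s‖ ≤ M₁ := (norm_ev_le_norm_seg_zero h x ⟨hs.1, hs₀⟩).trans hx0
    nlinarith [norm_nonneg (ev h x s), mul_nonneg hpos hG₀]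
  · have hGs : ∫ r in (0:ℝ)..s, (1 + supNormOn h x r ^ 2)
        ≤ ∫ r in (0:ℝ)..ρ, (1 + supNormOn h x r ^ 2) :=
      intervalIntegral.integral_mono_interval le_rfl hs₀.le hs.2 (.of_forall fun _ => by positivity)
        (intervalIntegrable_one_add_supNormOn_sq h x hτ le_rfl hρ.1)
    have hx₀ : ‖ev h x 0‖ ≤ M₁ := (norm_ev_le_norm_seg_zero h x ⟨by linarith, le_rfl⟩).trans hx0
    have hinc := norm_sub_sq_le_integral_supNormOn hτ hb hσ hgrowth hu hL le_rfl hs₀.le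
      (hs.2.trans hρ.2)
    have htri : ‖ev h x s‖ ≤ ‖ev h x 0‖ + ‖ev h x s - ev h x 0‖ := norm_le_insert' _ _
    -- `(a + c)² ≤ 3a² + (3/2)c²`, i.e. `0 ≤ (2a - c)² / 2`
    nlinarith [norm_nonneg (ev h x s), norm_nonneg (ev h x 0), norm_nonneg (ev h x s - ev h x 0),
      mul_le_mul_of_nonneg_left hGs hpos,
      sq_nonneg (2 * ‖ev h x 0‖ - ‖ev h x s - ev h x 0‖)]

lemma one_add_supNormOn_sq_le_mul_exp (hτ : 0 ≤ τ) (hb : Continuous b) (hσ : Continuous σ')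
    {κ₂ : ℝ} (hgrowth : GrowthCoeff b σ' κ₂) (hu : u ∈ controls h b σ' x) {L : ℝ}
    (hL : ∫ r in (0:ℝ)..T, ‖u r‖ ^ 2 ≤ L) {M₁ : ℝ} (hx0 : ‖seg h x 0‖ ≤ M₁)
    {ρ : ℝ} (hρ : ρ ∈ Icc 0 T) :
    1 + supNormOn h x ρ ^ 2 ≤ (1 + 3 * M₁ ^ 2) * exp (3 * (T + L) * κ₂ * ρ) := by
  have hL₀ : 0 ≤ L :=
    (intervalIntegral.integral_nonneg (hρ.1.trans hρ.2) fun _ _ => sq_nonneg _).trans hL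
  have hK : 0 ≤ 3 * (T + L) * κ₂ :=
    mul_nonneg (by linarith [hρ.1.trans hρ.2]) hgrowth.nonneg
  simpa using le_mul_exp_of_le_add_integral hK
    ((continuousOn_one_add_supNormOn_sq h x).mono fun r hr => show -τ ≤ r by linarith [hr.1])
    (fun ρ hρ => one_add_supNormOn_sq_le hτ hb hσ hgrowth hu hL hx0 hρ) ρ hρ

end Controls

theorem stmt_4_general {d m : ℕ} {τ T : ℝ} (hτ : 0 < τ) (hT : 0 < T)
    (h : -τ ≤ T)
    (b : Hist τ d → Vec d) (σ' : Hist τ d → Matrix (Fin d) (Fin m) ℝ)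
    {κ₁ κ₂ : ℝ}
    (hlip : LipCoeff b σ' κ₁) (hgrowth : GrowthCoeff b σ' κ₂)
    (M M₁ : ℝ) (hM : 0 < M)
    (M₂ M₃ : ℝ)
    (hM₂ : M₂ = (1 + 3 * M₁ ^ 2) * Real.exp (3 * T * κ₂ * (T + 2 * M + 1)))
    (hM₃ : M₃ = 2 * (T + 2 * M + 1) * κ₂ * M₂)
    (x : Traj τ T d) (hx0 : ‖seg h x 0‖ ≤ M₁) (hxM : rate h b σ' x ≤ ENNReal.ofReal M) :
    1 + supNormOn h x T ^ 2 ≤ M₂ ∧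
      ∀ s t : ℝ, 0 ≤ s → s < t → t ≤ T → ‖ev h x t - ev h x s‖ ^ 2 ≤ M₃ * |t - s| := by
  obtain ⟨u, hu, hU⟩ := exists_mem_controls_of_rate_lt <| hxM.trans_lt <|
    (ENNReal.ofReal_lt_ofReal_iff (by linarith)).2 (lt_add_of_pos_right M one_half_pos)
  have hL : ∫ r in (0:ℝ)..T, ‖u r‖ ^ 2 ≤ 2 * M + 1 := by linarith
  have hb := hlip.continuous_drift
  have hσ := hlip.continuous_diffusion
  have hκ₂ := hgrowth.nonneg
  have hbound : ∀ ρ ∈ Icc 0 T, 1 + supNormOn h x ρ ^ 2 ≤ M₂ := fun ρ hρ => by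
    refine (one_add_supNormOn_sq_le_mul_exp hτ.le hb hσ hgrowth hu hL hx0 hρ).trans ?_
    rw [hM₂]
    gcongr (1 + 3 * M₁ ^ 2) * exp ?_
    nlinarith [mul_le_mul_of_nonneg_left hρ.2 (by positivity : 0 ≤ 3 * (T + (2 * M + 1)) * κ₂)]
  refine ⟨hbound T ⟨hT.le, le_rfl⟩, fun s t hs hst ht => ?_⟩
  calc ‖ev h x t - ev h x s‖ ^ 2
      ≤ 2 * (T + (2 * M + 1)) * κ₂ * ∫ r in s..t, (1 + supNormOn h x r ^ 2) :=
        norm_sub_sq_le_integral_supNormOn hτ.le hb hσ hgrowth hu hL hs hst.le ht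
    _ ≤ 2 * (T + (2 * M + 1)) * κ₂ * ∫ _ in s..t, M₂ := by
        gcongr
        exact intervalIntegral.integral_mono_on hst.le
          (intervalIntegrable_one_add_supNormOn_sq h x hτ.le hs (hs.trans hst.le))
          intervalIntegrable_const fun r hr => hbound r ⟨hs.trans hr.1, hr.2.trans ht⟩
    _ = M₃ * |t - s| := by
        rw [intervalIntegral.integral_const, smul_eq_mul, abs_of_pos (sub_pos.2 hst), hM₃]; ring

/-- uniform boundedness and 1/2-Hölder continuity of elements of level sets. -/
theorem stmt_4 {d m : ℕ} (hd : 0 < d) (hm : 0 < m) {τ T : ℝ} (hτ : 0 < τ) (hT : 0 < T)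
    (h : -τ ≤ T)
    (b : Hist τ d → Vec d) (σ' : Hist τ d → Matrix (Fin d) (Fin m) ℝ)
    {κ₁ κ₂ : ℝ} (hκ₁ : 0 < κ₁) (hκ₂ : 0 < κ₂)
    (hlip : LipCoeff b σ' κ₁) (hgrowth : GrowthCoeff b σ' κ₂)
    (M M₁ : ℝ) (hM : 0 < M) (hM₁ : 0 < M₁)
    (M₂ M₃ : ℝ)
    (hM₂ : M₂ = (1 + 3 * M₁ ^ 2) * Real.exp (3 * T * κ₂ * (T + 2 * M + 1)))
    (hM₃ : M₃ = 2 * (T + 2 * M + 1) * κ₂ * M₂)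
    (x : Traj τ T d) (hx0 : ‖seg h x 0‖ ≤ M₁) (hxM : rate h b σ' x ≤ ENNReal.ofReal M) :
    1 + supNormOn h x T ^ 2 ≤ M₂ ∧
      ∀ s t : ℝ, 0 ≤ s → s < t → t ≤ T → ‖ev h x t - ev h x s‖ ^ 2 ≤ M₃ * |t - s| :=
  stmt_4_general hτ hT h b σ' hlip hgrowth M M₁ hM M₂ M₃ hM₂ hM₃ x hx0 hxM
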